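/- arXiv:1704.03580 — 3 statements merged into one kernel-verified Lean document; each statement's English description precedes it below -/
import Mathlib

section
/- If a finite group G embeds into GL_n(ℚ), then G embeds into GL_n(ℤ); consequently the minimal faithful rational representation dimension of a finite group equals its minimal faithful integral representation dimension. -/
/-!
Let `G` act faithfully on `V = Kⁿ`, `K` the fraction field of a PID `R`. The `R`-span of the
`G`-orbit of the standard basis is finitely generated (as `G` is finite), spans `V`, and is
`G`-stable; so it is a lattice, hence free of rank `n`, and in an `R`-basis of it `G` acts
faithfully by matrices in `GL_n(R)`.
-/

open Module Submodule

namespace Representation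

section Restriction

variable {G : Type*} [Monoid G] (R : Type*) {K V : Type*} [CommRing R] [Field K] [Algebra R K]
  [AddCommGroup V] [Module K V] [Module R V] [IsScalarTower R K V]

def restrictScalars (ρ : Representation K G V) : Representation R G V where
  toFun g := (ρ g).restrictScalars R
  map_one' := by ext; simp
  map_mul' _ _ := by ext; simp

@[simp]
lemma restrictScalars_apply (ρ : Representation K G V) (g : G) (x : V) :
    ρ.restrictScalars R g x = ρ g x := rfl

def orbitSpan (ρ : Representation K G V) (s : Set V) : Submodule R V :=
  span R (⋃ g, ρ g '' s)

variable {R}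

lemma orbitSpan_le_comap (ρ : Representation K G V) (s : Set V) (g : G) :
    orbitSpan R ρ s ≤ (orbitSpan R ρ s).comap (ρ.restrictScalars R g) := by
  refine span_le.2 ?_
  rintro - ⟨-, ⟨h, rfl⟩, x, hx, rfl⟩
  refine subset_span (Set.mem_iUnion.2 ⟨g * h, x, hx, ?_⟩)
  simp

lemma isLattice_orbitSpan [Finite G] (ρ : Representation K G V) {s : Set V} (hs : s.Finite)
    (hspan : span K s = ⊤) : IsLattice K (orbitSpan R ρ s) where
  fg := fg_span (Set.finite_iUnion fun g => hs.image _)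
  span_eq_top := by
    refine eq_top_iff.2 (hspan ▸ span_mono fun x hx => ?_)
    exact show x ∈ orbitSpan R ρ s from
      subset_span (Set.mem_iUnion_of_mem 1 ⟨x, hx, by simp⟩)

lemma injective_subrepresentation_restrictScalars {ρ : Representation K G V}
    (hρ : Function.Injective ρ) {M : Submodule R V} (hM : span K (M : Set V) = ⊤)
    (hMρ : ∀ g, M ≤ M.comap (ρ.restrictScalars R g)) :
    Function.Injective ((ρ.restrictScalars R).subrepresentation M hMρ) := by
  intro g h hgh
  refine hρ (LinearMap.ext_on hM fun x hx => ?_)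
  simpa using congr(($hgh ⟨x, hx⟩ : V))

end Restriction

lemma exists_injective_GL_iff {G R M ι : Type*} [Group G] [CommRing R] [AddCommGroup M]
    [Module R M] [Fintype ι] [DecidableEq ι] (b : Basis ι R M) :
    (∃ f : G →* GL ι R, Function.Injective f) ↔
      ∃ ρ : Representation R G M, Function.Injective ρ := by
  constructor
  · rintro ⟨f, hf⟩
    refine ⟨(Units.coeHom _).comp ((Matrix.GeneralLinearGroup.toLin' b).toMonoidHom.comp f),
      fun g h hgh => hf ((Matrix.GeneralLinearGroup.toLin' b).injective (Units.ext hgh))⟩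
  · rintro ⟨ρ, hρ⟩
    refine ⟨(Matrix.GeneralLinearGroup.toLin' b).symm.toMonoidHom.comp ρ.toHomUnits,
      fun g h hgh => hρ ?_⟩
    exact congr(($((Matrix.GeneralLinearGroup.toLin' b).symm.injective hgh) : Module.End R M))

end Representation

open Representation in
theorem exists_injective_GL_of_isFractionRing (R K : Type*) [CommRing R] [IsDomain R]
    [IsPrincipalIdealRing R] [Field K] [Algebra R K] [IsFractionRing R K]
    {G ι : Type*} [Group G] [Finite G] [Fintype ι] [DecidableEq ι]
    (hK : ∃ f : G →* GL ι K, Function.Injective f) :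
    ∃ f : G →* GL ι R, Function.Injective f := by
  obtain ⟨ρ, hρ⟩ := (exists_injective_GL_iff (Pi.basisFun K ι)).1 hK
  set M := orbitSpan R ρ (Set.range (Pi.basisFun K ι))
  have : IsLattice K M :=
    isLattice_orbitSpan ρ (Set.finite_range _) (Pi.basisFun K ι).span_eq
  let bM := Free.chooseBasis R M
  let b : Basis ι R M := bM.reindex ((bM.extendOfIsLattice K).indexEquiv (Pi.basisFun K ι))
  exact (exists_injective_GL_iff b).2
    ⟨_, injective_subrepresentation_restrictScalars hρ IsLattice.span_eq_top
      (orbitSpan_le_comap ρ _)⟩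

lemma Matrix.GeneralLinearGroup.map_injective {n R S : Type*} [Fintype n] [DecidableEq n]
    [CommRing R] [CommRing S] {f : R →+* S} (hf : Function.Injective f) :
    Function.Injective (map (n := n) f) :=
  fun _ _ h => Units.ext (Matrix.map_injective hf congr(($h : Matrix n n S)))

theorem stmt1 {G : Type*} [Group G] [Finite G] :
    (∀ n : ℕ, (∃ f : G →* GL (Fin n) ℚ, Function.Injective f) →
      ∃ f : G →* GL (Fin n) ℤ, Function.Injective f) ∧
    sInf {n : ℕ | ∃ f : G →* GL (Fin n) ℚ, Function.Injective f} =
      sInf {n : ℕ | ∃ f : G →* GL (Fin n) ℤ, Function.Injective f} := by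
  have hQZ (n : ℕ) := exists_injective_GL_of_isFractionRing ℤ ℚ (G := G) (ι := Fin n)
  refine ⟨hQZ, congrArg sInf (Set.ext fun n => ⟨hQZ n, ?_⟩)⟩
  rintro ⟨f, hf⟩
  exact ⟨(Matrix.GeneralLinearGroup.map (Int.castRingHom ℚ)).comp f,
    (Matrix.GeneralLinearGroup.map_injective Int.cast_injective).comp hf⟩
end

section
/- Any element of prime order p in GL_n(ℤ) satisfies p ≤ n + 1. -/
/-!
An integer matrix `g` of prime order `p` is, over `ℚ`, a root of `X ^ p - 1 = Φ_p · (X - 1)`.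
Since `g ≠ 1` its minimal polynomial does not divide `X - 1`, so the irreducible factor `Φ_p`
divides it, and hence the characteristic polynomial, of degree `n`. Thus `p - 1 = deg Φ_p ≤ n`.
-/

open Polynomial

theorem Polynomial.cyclotomic_dvd_minpoly_of_orderOf_eq_prime {K A : Type*} [Field K] [Ring A]
    [Algebra K A] {p : ℕ} (hp : p.Prime) (hirr : Irreducible (cyclotomic p K)) {a : A}
    (ha : orderOf a = p) : cyclotomic p K ∣ minpoly K a := by
  have : Fact p.Prime := ⟨hp⟩
  have ha1 : a ≠ 1 := by
    rintro rfl
    exact hp.one_lt.ne' (ha ▸ orderOf_one)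
  have hdvd : minpoly K a ∣ cyclotomic p K * (X - 1) := by
    rw [cyclotomic_prime_mul_X_sub_one, minpoly.dvd_iff]
    simp [← ha, pow_orderOf_eq_one]
  by_contra hndvd
  have hcop : IsCoprime (minpoly K a) (cyclotomic p K) :=
    (hirr.coprime_iff_not_dvd.mpr hndvd).symm
  have hroot : aeval a (X - 1 : K[X]) = 0 := minpoly.dvd_iff.mp (hcop.dvd_of_dvd_mul_left hdvd)
  exact ha1 (by simpa [sub_eq_zero] using hroot)

theorem Matrix.prime_le_card_add_one_of_orderOf_eq {ι : Type*} [Fintype ι] [DecidableEq ι]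
    {M : Matrix ι ι ℚ} {p : ℕ} (hp : p.Prime) (hM : orderOf M = p) :
    p ≤ Fintype.card ι + 1 := by
  have hcyc := cyclotomic_dvd_minpoly_of_orderOf_eq_prime hp
    (cyclotomic.irreducible_rat hp.pos) hM
  have hdeg : (cyclotomic p ℚ).natDegree ≤ M.charpoly.natDegree :=
    natDegree_le_of_dvd (hcyc.trans M.minpoly_dvd_charpoly) M.charpoly_monic.ne_zero
  rw [natDegree_cyclotomic, Nat.totient_prime hp, charpoly_natDegree_eq_dim] at hdeg
  omega

theorem stmt5_general {n : ℕ} {p : ℕ} (hp : p.Prime) (g : GL (Fin n) ℤ)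
    (hg : orderOf g = p) : p ≤ n + 1 := by
  let toRat : GL (Fin n) ℤ →* Matrix (Fin n) (Fin n) ℚ :=
    (Int.castRingHom ℚ).mapMatrix.toMonoidHom.comp (Units.coeHom _)
  have hinj : Function.Injective toRat :=
    (Matrix.map_injective Int.cast_injective).comp Units.val_injective
  have hM : orderOf (toRat g) = p := (orderOf_injective toRat hinj g).trans hg
  simpa using Matrix.prime_le_card_add_one_of_orderOf_eq hp hM

theorem stmt5 {n : ℕ} {p : ℕ} (hp : p.Prime) (g : GL (Fin n) ℤ)
    (hg : orderOf g = p) (hg1 : g ≠ 1) : p ≤ n + 1 :=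
  stmt5_general hp g hg
end

section
/- For n ≥ 3, the special linear group SL_n(ℤ) is normally generated by the alternating group A_{n+1}, where A_{n+1} is embedded in SL_n(ℤ) as the image of even permutation matrices acting on the standard (n+1)-dimensional permutation representation restricted to the sum-zero sublattice. -/
/-- The matrix of the even permutation `σ` of `Fin (n+1)` acting on the sum-zero
sublattice of `ℤ^{n+1}`, in the basis `e_j - e_{last}`, `j < n`. -/
def stdRepMatrix (n : ℕ) (σ : Equiv.Perm (Fin (n + 1))) : Matrix (Fin n) (Fin n) ℤ :=
  Matrix.of fun i j =>
    (if σ j.castSucc = i.castSucc then 1 else 0) -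
      (if σ (Fin.last n) = i.castSucc then 1 else 0)

/-!
SL_n(ℤ) is generated by the elementary matrices `1 + c E_ik`: Euclid's algorithm, run on the
columns one after the other, reduces any matrix to the identity by row operations. A permutation
`π` of `Fin n`, extended by `π (last) = last`, acts on the sum-zero lattice by its permutation
matrix `P`. If `π` is the 3-cycle `i ↦ j ↦ k`, the normal closure `N` of `A_{n+1}` contains
`⁅1 + c E_ij, P⁆ = (1 + c E_ij)(1 - c E_jk)`, and the commutator of this with `1 + E_jk` is the
Steinberg commutator `⁅1 + c E_ij, 1 + E_jk⁆ = 1 + c E_ik`. Hence `N` contains every elementary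
matrix.
-/

open Matrix Equiv
open scoped MatrixGroups commutatorElement

namespace Matrix

def FirstColsEqOne {n : ℕ} {R : Type*} [CommRing R] (k : ℕ) (A : Matrix (Fin n) (Fin n) R) :
    Prop :=
  ∀ i j : Fin n, (j : ℕ) < k → A i j = (1 : Matrix (Fin n) (Fin n) R) i j

namespace FirstColsEqOne

variable {n : ℕ} {R : Type*} [CommRing R] {k : ℕ} {A : Matrix (Fin n) (Fin n) R}

lemma transvection_mul (hA : FirstColsEqOne k A) {i j : Fin n} (hj : k ≤ j) (c : R) :
    FirstColsEqOne k (transvection i j c * A) := by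
  intro a b hb
  rcases eq_or_ne a i with rfl | ha
  · rw [transvection_mul_apply_same, hA j b hb, one_apply_ne (by rintro rfl; omega), mul_zero,
      add_zero, hA a b hb]
  · rw [transvection_mul_apply_of_ne i j a b ha, hA a b hb]

lemma succ (hA : FirstColsEqOne k A) {j : Fin n} (hj : (j : ℕ) = k)
    (hcol : ∀ i, A i j = (1 : Matrix (Fin n) (Fin n) R) i j) : FirstColsEqOne (k + 1) A := by
  intro i l hl
  rcases Nat.lt_succ_iff_lt_or_eq.mp hl with hl | hl
  · exact hA i l hl
  · rw [show l = j from Fin.ext (hl.trans hj.symm)]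
    exact hcol i

lemma isUnit_of_dvd_col {A : SpecialLinearGroup (Fin n) R} {k : Fin n}
    (hA : FirstColsEqOne k (A : Matrix (Fin n) (Fin n) R)) {d : R}
    (hd : ∀ l : Fin n, k ≤ l → d ∣ A l k) : IsUnit d := by
  -- Row `k` of `A⁻¹` is a Bézout certificate for the entries `A l k`, `k ≤ l`.
  have hinv : ∀ l, ∑ m, A⁻¹ k m * A m l = (1 : Matrix (Fin n) (Fin n) R) k l := fun l => by
    rw [← mul_apply, ← SpecialLinearGroup.coe_mul, inv_mul_cancel, SpecialLinearGroup.coe_one]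
  have hzero : ∀ l : Fin n, l < k → A⁻¹ k l = 0 := fun l hl => by
    have h := hinv l
    rwa [Finset.sum_eq_single l (fun m _ hm => by rw [hA m l hl, one_apply_ne hm, mul_zero])
      (by simp), hA l l hl, one_apply_eq, mul_one, one_apply_ne hl.ne'] at h
  refine isUnit_of_dvd_one ?_
  rw [← one_apply_eq (n := Fin n) (α := R) k, ← hinv k]
  refine Finset.dvd_sum fun l _ => ?_
  rcases lt_or_ge l k with hl | hl
  · simp [hzero l hl]
  · exact (hd l hl).mul_left _

lemma det_eq_apply_of_isMax {k : Fin n} (hA : FirstColsEqOne k A) (hk : IsMax k) :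
    A.det = A k k := by
  have hle : ∀ l, l ≤ k := fun l => (le_total l k).elim id fun h => hk h
  rw [det_of_isUpperTriangular, Finset.prod_eq_single k (fun l _ hl => by
    rw [hA l l ((hle l).lt_of_ne hl), one_apply_eq]) (by simp)]
  intro i j hji
  rw [hA i j (hji.trans_le (hle i)), one_apply_ne (show i ≠ j from ne_of_gt hji)]

end FirstColsEqOne

namespace SpecialLinearGroup

section CommRing

variable {ι R : Type*} [Fintype ι] [DecidableEq ι] [CommRing R]

lemma transvection_mul_apply {i j : ι} (hij : i ≠ j) (c : R) (A : SpecialLinearGroup ι R)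
    (a b : ι) : (transvection hij c * A) a b = A a b + if a = i then c * A j b else 0 := by
  change (Matrix.transvection i j c * (A : Matrix ι ι R)) a b = _
  split_ifs with h
  · rw [h, transvection_mul_apply_same]
  · rw [transvection_mul_apply_of_ne i j a b h, add_zero]

lemma commutatorElement_transvection {i j k : ι} (hij : i ≠ j) (hjk : j ≠ k) (hik : i ≠ k)
    (a b : R) : ⁅transvection hij a, transvection hjk b⁆ = transvection hik (a * b) := by
  apply Subtype.ext
  simp only [commutatorElement_def, transvection_inv, coe_mul, transvection_coe, mul_add, add_mul,
    one_mul, mul_one, single_mul_single_same, single_mul_single_of_ne _ _ _ _ hik.symm,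
    single_mul_single_of_ne _ _ _ _ hij.symm, single_mul_single_of_ne _ _ _ _ hjk.symm,
    add_zero, neg_mul, mul_neg, ← single_neg]
  abel

def ofAlternating (π : Perm ι) (hπ : π ∈ alternatingGroup ι) : SpecialLinearGroup ι R :=
  ⟨(π⁻¹).permMatrix R, by simp [Perm.mem_alternatingGroup.mp hπ]⟩

lemma ofAlternating_mul_transvection (π : Perm ι) (hπ : π ∈ alternatingGroup ι) {i j : ι}
    (hij : i ≠ j) (c : R) :
    ofAlternating π hπ * transvection hij c =
      transvection (π.injective.ne hij) c * ofAlternating π hπ := by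
  apply Subtype.ext
  change (π⁻¹).permMatrix R * Matrix.transvection i j c =
    Matrix.transvection (π i) (π j) c * (π⁻¹).permMatrix R
  ext a b
  simp only [Matrix.transvection, PEquiv.toMatrix_toPEquiv_mul, PEquiv.mul_toMatrix_toPEquiv,
    submatrix_apply, add_apply, one_apply, single_apply, id]
  simp only [Perm.inv_def, symm_symm, eq_symm_apply, π.injective.eq_iff, eq_comm]

lemma transvection_mem_of_normal {N : Subgroup (SpecialLinearGroup ι R)} (hN : N.Normal)
    (hperm : ∀ π (hπ : π ∈ alternatingGroup ι), ofAlternating π hπ ∈ N)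
    {i j k : ι} (hij : i ≠ j) (hjk : j ≠ k) (hik : i ≠ k) (c : R) :
    transvection hik c ∈ N := by
  have hπ := (Perm.isThreeCycle_swap_mul_swap_same hik hij hjk.symm).mem_alternatingGroup
  set P : SpecialLinearGroup ι R := ofAlternating (Equiv.swap i k * Equiv.swap i j) hπ
  have hconj : P * transvection hij (-c) * P⁻¹ = transvection hjk (-c) := by
    rw [ofAlternating_mul_transvection, mul_inv_cancel_right]
    refine Subtype.ext ?_
    simp [transvection_coe, swap_apply_def, hij.symm, hjk]
  have hcomm : ⁅transvection hij c, P⁆ = transvection hij c * transvection hjk (-c) := by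
    rw [commutatorElement_def, transvection_inv, ← hconj]
    group
  have hy : transvection hij c * transvection hjk (-c) ∈ N :=
    hcomm ▸ N.mul_mem (hN.conj_mem P (hperm _ hπ) _) (N.inv_mem (hperm _ hπ))
  have hcomm' : ⁅transvection hij c * transvection hjk (-c), transvection hjk 1⁆ =
      transvection hik c := by
    have hc : transvection hjk (-c) * transvection hjk 1 =
        transvection hjk 1 * transvection hjk (-c) := by
      rw [← transvection_add, ← transvection_add, add_comm]
    calc _ = ⁅transvection hij c, transvection hjk 1⁆ := by
          rw [commutatorElement_def, commutatorElement_def, mul_assoc (transvection hij c), hc]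
          group
      _ = transvection hik c := by rw [commutatorElement_transvection, mul_one]
  rw [← hcomm', ← commutatorElement_inv]
  exact N.inv_mem (N.mul_mem (hN.conj_mem _ hy _) (N.inv_mem hy))

end CommRing

section Int

variable {n : ℕ} {H : Subgroup SL(n, ℤ)}

lemma sum_natAbs_col_transvection_mul_lt (A : SL(n, ℤ)) {i j : Fin n} (hij : i ≠ j) (k : Fin n)
    (hj0 : A j k ≠ 0) (hle : (A j k).natAbs ≤ (A i k).natAbs) :
    ∑ l, ((transvection hij (-(A i k / A j k)) * A) l k).natAbs < ∑ l, (A l k).natAbs := by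
  have hi : A i k + -(A i k / A j k) * A j k = A i k % A j k := by
    rw [Int.emod_def]
    ring
  have hrem : (A i k % A j k).natAbs < (A i k).natAbs := by
    have h1 := Int.emod_nonneg (A i k) hj0
    have h2 := Int.emod_lt_abs (A i k) hj0
    rw [Int.abs_eq_natAbs] at h2
    omega
  refine Finset.sum_lt_sum (fun l _ => ?_) ⟨i, Finset.mem_univ _, ?_⟩
  · rw [transvection_mul_apply]
    split_ifs with hli
    · rw [hli, hi]
      exact hrem.le
    · rw [add_zero]
  · rwa [transvection_mul_apply, if_pos rfl, hi]

lemma mem_of_col_eq_single_of_lt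
    (hH : ∀ (i j : Fin n) (hij : i ≠ j) (c : ℤ), transvection hij c ∈ H) {k : Fin n}
    (hsucc : ∀ B : SL(n, ℤ), FirstColsEqOne (k + 1) (B : Matrix (Fin n) (Fin n) ℤ) →
      B ∈ H)
    {A : SL(n, ℤ)} (hA : FirstColsEqOne k (A : Matrix (Fin n) (Fin n) ℤ)) {j : Fin n}
    (hkj : k < j) {u : ℤ} (hu : u * u = 1) (hcol : ∀ i, A i k = if i = j then u else 0) :
    A ∈ H := by
  rw [← H.mul_mem_cancel_left (hH k j hkj.ne u), ← H.mul_mem_cancel_left (hH j k hkj.ne' (-u))]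
  refine hsucc _ (((hA.transvection_mul hkj.le u).transvection_mul le_rfl (-u)).succ rfl
    fun i => ?_)
  change (transvection hkj.ne' (-u) * (transvection hkj.ne u * A)) i k = _
  simp only [transvection_mul_apply, hcol, one_apply]
  rcases eq_or_ne i j with rfl | hij <;> rcases eq_or_ne i k with rfl | hik <;>
    simp_all [hkj.ne, hkj.ne']

lemma mem_of_col_eq_single
    (hH : ∀ (i j : Fin n) (hij : i ≠ j) (c : ℤ), transvection hij c ∈ H) {k : Fin n}
    (hsucc : ∀ B : SL(n, ℤ), FirstColsEqOne (k + 1) (B : Matrix (Fin n) (Fin n) ℤ) →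
      B ∈ H)
    {A : SL(n, ℤ)} (hA : FirstColsEqOne k (A : Matrix (Fin n) (Fin n) ℤ)) {j : Fin n}
    (hkj : k ≤ j) {u : ℤ} (hu : IsUnit u) (hcol : ∀ i, A i k = if i = j then u else 0) :
    A ∈ H := by
  rcases hkj.lt_or_eq with hkj | rfl
  · exact mem_of_col_eq_single_of_lt hH hsucc hA hkj
      (by rcases Int.isUnit_iff.mp hu with rfl | rfl <;> rfl) hcol
  rcases Int.isUnit_iff.mp hu with rfl | rfl
  · exact hsucc A (hA.succ rfl fun i => by rw [hcol, one_apply])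
  by_cases hk : IsMax k
  · have hdet := hA.det_eq_apply_of_isMax hk
    rw [det_coe, hcol, if_pos rfl] at hdet
    norm_num at hdet
  -- The pivot is `-1`: move it to a lower row `l` as `+1`.
  obtain ⟨l, hkl⟩ := not_isMax_iff.mp hk
  rw [← H.mul_mem_cancel_left (hH l k hkl.ne' (-1)), ← H.mul_mem_cancel_left (hH k l hkl.ne 1)]
  refine mem_of_col_eq_single_of_lt hH hsucc
    ((hA.transvection_mul le_rfl _).transvection_mul hkl.le _) hkl (u := 1) rfl fun i => ?_
  simp only [transvection_mul_apply, hcol]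
  rcases eq_or_ne i l with rfl | hil <;> rcases eq_or_ne i k with rfl | hik <;>
    simp_all [hkl.ne, hkl.ne']

lemma mem_of_firstColsEqOne
    (hH : ∀ (i j : Fin n) (hij : i ≠ j) (c : ℤ), transvection hij c ∈ H) {k : Fin n}
    (hsucc : ∀ B : SL(n, ℤ), FirstColsEqOne (k + 1) (B : Matrix (Fin n) (Fin n) ℤ) →
      B ∈ H)
    (A : SL(n, ℤ)) (hA : FirstColsEqOne k (A : Matrix (Fin n) (Fin n) ℤ)) : A ∈ H := by
  induction hm : ∑ i, (A i k).natAbs using Nat.strong_induction_on generalizing A with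
  | _ m ih =>
    have hne : ({l | k ≤ l ∧ A l k ≠ 0} : Finset (Fin n)).Nonempty := by
      by_contra h
      simp only [Finset.not_nonempty_iff_eq_empty, Finset.filter_eq_empty_iff, Finset.mem_univ,
        true_implies, not_and, not_not] at h
      exact not_isUnit_zero (hA.isUnit_of_dvd_col fun l hl => by rw [h hl])
    obtain ⟨j, hj, hjmin⟩ := Finset.exists_min_image _ (fun l => (A l k).natAbs) hne
    simp only [Finset.mem_filter, Finset.mem_univ, true_and, and_imp] at hj hjmin
    obtain ⟨hkj, hj0⟩ := hj
    by_cases hred : ∃ i ≠ j, (A j k).natAbs ≤ (A i k).natAbs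
    · obtain ⟨i, hij, hle⟩ := hred
      rw [← H.mul_mem_cancel_left (hH i j hij (-(A i k / A j k)))]
      exact ih _ (hm ▸ sum_natAbs_col_transvection_mul_lt A hij k hj0 hle) _
        (hA.transvection_mul hkj _) rfl
    -- Otherwise the pivot is the only nonzero entry in rows `≥ k`, hence a unit, and the
    -- entries in the other rows are smaller than it, hence zero.
    simp only [not_exists, not_and, not_le] at hred
    have hzero : ∀ l, k ≤ l → l ≠ j → A l k = 0 := fun l hkl hlj => by
      by_contra hl0
      exact (hred l hlj).not_ge (hjmin l hkl hl0)
    have hunit : IsUnit (A j k) := hA.isUnit_of_dvd_col fun l hl => by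
      rcases eq_or_ne l j with rfl | hlj
      · exact dvd_rfl
      · rw [hzero l hl hlj]
        exact dvd_zero _
    refine mem_of_col_eq_single hH hsucc hA hkj hunit fun i => ?_
    split_ifs with hij
    · rw [hij]
    · have := hred i hij
      rw [Int.isUnit_iff_natAbs_eq.mp hunit] at this
      omega

theorem eq_top_of_transvection_mem
    (hH : ∀ (i j : Fin n) (hij : i ≠ j) (c : ℤ), transvection hij c ∈ H) : H = ⊤ := by
  have key : ∀ k ≤ n, ∀ A : SL(n, ℤ), FirstColsEqOne k (A : Matrix (Fin n) (Fin n) ℤ) →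
      A ∈ H := by
    intro k hk
    induction hk using Nat.decreasingInduction with
    | self =>
      intro A hA
      rw [show A = 1 from ext _ _ fun i j => by rw [hA i j j.isLt, coe_one]]
      exact H.one_mem
    | of_succ k hk ih => exact mem_of_firstColsEqOne hH (k := ⟨k, hk⟩) ih
  exact (Subgroup.eq_top_iff' H).mpr fun A =>
    key 0 n.zero_le A fun _ _ hj => absurd hj (Nat.not_lt_zero _)

end Int

end SpecialLinearGroup

end Matrix

section StandardRepresentation

variable {n : ℕ}

lemma Fin.eq_of_forall_eq_castSucc_iff {x y : Fin (n + 1)}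
    (h : ∀ i : Fin n, x = i.castSucc ↔ y = i.castSucc) : x = y := by
  induction x using Fin.lastCases <;> induction y using Fin.lastCases
  · rfl
  · exact absurd ((h _).2 rfl) (Fin.castSucc_lt_last _).ne'
  · exact absurd ((h _).1 rfl) (Fin.castSucc_lt_last _).ne'
  · exact ((h _).1 rfl).symm

lemma stdRepMatrix_apply_eq_neg_one_iff (σ : Perm (Fin (n + 1))) (i j : Fin n) :
    stdRepMatrix n σ i j = -1 ↔ σ (Fin.last n) = i.castSucc := by
  have hne : σ j.castSucc ≠ σ (Fin.last n) := σ.injective.ne (Fin.castSucc_lt_last j).ne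
  simp only [stdRepMatrix, of_apply]
  split_ifs <;> simp_all

theorem stdRepMatrix_injective : Function.Injective (stdRepMatrix n) := by
  rcases n.eq_zero_or_pos with rfl | hn
  · exact fun σ τ _ => Equiv.ext fun x => Subsingleton.elim (α := Fin 1) _ _
  intro σ τ h
  have hlast : σ (Fin.last n) = τ (Fin.last n) := Fin.eq_of_forall_eq_castSucc_iff fun i => by
    rw [← stdRepMatrix_apply_eq_neg_one_iff σ i ⟨0, hn⟩,
      ← stdRepMatrix_apply_eq_neg_one_iff τ i ⟨0, hn⟩, h]
  ext1 x
  refine Fin.lastCases hlast (fun j => Fin.eq_of_forall_eq_castSucc_iff fun i => ?_) x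
  have hij := congrFun (congrFun h i) j
  simp only [stdRepMatrix, of_apply, hlast, sub_left_inj] at hij
  split_ifs at hij <;> simp_all

def Equiv.Perm.castSuccExtend (π : Perm (Fin n)) : Perm (Fin (n + 1)) :=
  (permCongr finSuccEquivLast).symm π.optionCongr

lemma Equiv.Perm.sign_castSuccExtend (π : Perm (Fin n)) : sign π.castSuccExtend = sign π := by
  rw [castSuccExtend, permCongr_symm, sign_permCongr, optionCongr_sign]

lemma stdRepMatrix_castSuccExtend (π : Perm (Fin n)) :
    stdRepMatrix n π.castSuccExtend = (π⁻¹).permMatrix ℤ := by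
  ext i j
  simp [stdRepMatrix, Perm.castSuccExtend, permCongr_apply, PEquiv.toMatrix_apply, Perm.inv_def,
    eq_symm_apply, eq_comm]

end StandardRepresentation

theorem stmt16 (n : ℕ) (hn : 3 ≤ n) :
    (∀ σ τ : Equiv.Perm (Fin (n + 1)), σ ∈ alternatingGroup (Fin (n + 1)) →
      τ ∈ alternatingGroup (Fin (n + 1)) → stdRepMatrix n σ = stdRepMatrix n τ → σ = τ) ∧
    Subgroup.normalClosure
      {g : Matrix.SpecialLinearGroup (Fin n) ℤ | ∃ σ ∈ alternatingGroup (Fin (n + 1)),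
        (g : Matrix (Fin n) (Fin n) ℤ) = stdRepMatrix n σ} = ⊤ := by
  refine ⟨fun σ τ _ _ h => stdRepMatrix_injective h, ?_⟩
  refine SpecialLinearGroup.eq_top_of_transvection_mem fun i k hik c => ?_
  obtain ⟨j, hji, hjk⟩ := Fin.exists_ne_and_ne_of_two_lt i k (by omega)
  refine SpecialLinearGroup.transvection_mem_of_normal Subgroup.normalClosure_normal
    (fun π hπ => ?_) hji.symm hjk hik c
  apply Subgroup.subset_normalClosure
  exact ⟨π.castSuccExtend, by rwa [Perm.mem_alternatingGroup, Perm.sign_castSuccExtend],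
    (stdRepMatrix_castSuccExtend π).symm⟩
end
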